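/- Subject reduction for λυ′: if n ⊢ a is derivable and a → b is a one-step λυ′-reduction, then n ⊢ b is derivable. -/

import Mathlib

abbrev Var := ℕ

mutual
/-- Terms of the calculus λυ′: named variables, De Bruijn index 1,
application, abstraction, and explicit substitution `a[s]`. -/
inductive UTm : Type
  | fvar : Var → UTm
  | one : UTm
  | app : UTm → UTm → UTm
  | lam : UTm → UTm
  | sub : UTm → USb → UTm
/-- Substitutions of λυ′: `b/`, `↑`, `id`, `⇑s`. -/
inductive USb : Type
  | slash : UTm → USb
  | up : USb
  | id : USb
  | lift : USb → USb
end

mutual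
/-- One-step υ′-reduction (λυ′ without Beta), closed under compatible contexts. -/
inductive UStep : UTm → UTm → Prop
  | app {a b s} : UStep (.sub (.app a b) s) (.app (.sub a s) (.sub b s))
  | lam {a s} : UStep (.sub (.lam a) s) (.lam (.sub a (.lift s)))
  | var {b} : UStep (.sub .one (.slash b)) b
  | shift {a b} : UStep (.sub (.sub a .up) (.slash b)) a
  | varId : UStep (.sub .one .id) .one
  | shiftId {a} : UStep (.sub (.sub a .up) .id) (.sub a .up)
  | varLift {s} : UStep (.sub .one (.lift s)) .one
  | shiftLift {a s} : UStep (.sub (.sub a .up) (.lift s)) (.sub (.sub a s) .up)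
  | appL {a a' b} : UStep a a' → UStep (.app a b) (.app a' b)
  | appR {a b b'} : UStep b b' → UStep (.app a b) (.app a b')
  | lamC {a a'} : UStep a a' → UStep (.lam a) (.lam a')
  | subL {a a' s} : UStep a a' → UStep (.sub a s) (.sub a' s)
  | subR {a : UTm} {s s'} : USStep s s' → UStep (.sub a s) (.sub a s')
/-- One-step υ′-reduction inside substitutions. -/
inductive USStep : USb → USb → Prop
  | slash {b b'} : UStep b b' → USStep (.slash b) (.slash b')
  | lift {s s' : USb} : USStep s s' → USStep (.lift s) (.lift s')
end

mutual
/-- The typing judgement `n ⊢ a` of λυ′. -/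
inductive UJ : ℕ → UTm → Prop
  | fvar (x : Var) : UJ 0 (.fvar x)
  | one (n : ℕ) : UJ (n + 1) .one
  | app {n a b} : UJ n a → UJ n b → UJ n (.app a b)
  | lam {n a} : UJ (n + 1) a → UJ n (.lam a)
  | sub {n m s a} : USJ n s m → UJ m a → UJ n (.sub a s)
/-- The judgement `n ⊢ s ▷ m` of λυ′. -/
inductive USJ : ℕ → USb → ℕ → Prop
  | slash {n b} : UJ n b → USJ n (.slash b) (n + 1)
  | up (n : ℕ) : USJ (n + 1) .up n
  | id (n : ℕ) : USJ (n + 1) .id (n + 1)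
  | lift {n m s} : USJ n s m → USJ (n + 1) (.lift s) (m + 1)
end

mutual
/-- One-step λυ′-reduction (υ′ together with Beta), closed under compatible
contexts. -/
inductive LStep : UTm → UTm → Prop
  | beta {a b} : LStep (.app (.lam a) b) (.sub a (.slash b))
  | app {a b s} : LStep (.sub (.app a b) s) (.app (.sub a s) (.sub b s))
  | lam {a s} : LStep (.sub (.lam a) s) (.lam (.sub a (.lift s)))
  | var {b} : LStep (.sub .one (.slash b)) b
  | shift {a b} : LStep (.sub (.sub a .up) (.slash b)) a
  | varId : LStep (.sub .one .id) .one
  | shiftId {a} : LStep (.sub (.sub a .up) .id) (.sub a .up)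
  | varLift {s} : LStep (.sub .one (.lift s)) .one
  | shiftLift {a s} : LStep (.sub (.sub a .up) (.lift s)) (.sub (.sub a s) .up)
  | appL {a a' b} : LStep a a' → LStep (.app a b) (.app a' b)
  | appR {a b b'} : LStep b b' → LStep (.app a b) (.app a b')
  | lamC {a a'} : LStep a a' → LStep (.lam a) (.lam a')
  | subL {a a' s} : LStep a a' → LStep (.sub a s) (.sub a' s)
  | subR {a : UTm} {s s'} : LSStep s s' → LStep (.sub a s) (.sub a s')
/-- One-step λυ′-reduction inside substitutions. -/
inductive LSStep : USb → USb → Prop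
  | slash {b b'} : LStep b b' → LSStep (.slash b) (.slash b')
  | lift {s s' : USb} : LSStep s s' → LSStep (.lift s) (.lift s')
end

mutual
theorem LStep.preserves_UJ {n : ℕ} {a b : UTm} : LStep a b → UJ n a → UJ n b
  | .beta, .app (.lam ha) hb => .sub (.slash hb) ha
  | .app, .sub hs (.app ha hb) => .app (.sub hs ha) (.sub hs hb)
  | .lam, .sub hs (.lam ha) => .lam (.sub (.lift hs) ha)
  | .var, .sub (.slash hb) _ => hb
  | .shift, .sub (.slash _) (.sub (.up _) ha) => ha
  | .varId, .sub (.id _) _ => .one _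
  | .shiftId, .sub (.id _) ha => ha
  | .varLift, .sub (.lift _) _ => .one _
  | .shiftLift, .sub (.lift hs) (.sub (.up _) ha) => .sub (.up _) (.sub hs ha)
  | .appL h, .app ha hb => .app (h.preserves_UJ ha) hb
  | .appR h, .app ha hb => .app ha (h.preserves_UJ hb)
  | .lamC h, .lam ha => .lam (h.preserves_UJ ha)
  | .subL h, .sub hs ha => .sub hs (h.preserves_UJ ha)
  | .subR h, .sub hs ha => .sub (h.preserves_USJ hs) ha

theorem LSStep.preserves_USJ {n m : ℕ} {s s' : USb} : LSStep s s' → USJ n s m → USJ n s' m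
  | .slash h, .slash hb => .slash (h.preserves_UJ hb)
  | .lift h, .lift hs => .lift (h.preserves_USJ hs)
end

/-- Subject reduction for λυ′. -/
theorem upsilon'_subject_reduction (n : ℕ) (a b : UTm) :
    UJ n a → LStep a b → UJ n b := fun hj h => h.preserves_UJ hj
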